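/- arXiv:2305.02892 — 6 statements merged into one kernel-verified Lean document; each statement's English description precedes it below -/
import Mathlib

section
/- Let V be a vector space over a field of characteristic not 2, G a bilinear form on V, and φ₁,…,φ_r linearly independent linear forms on V with common kernel V₀. Then the restriction of G to V₀ is symmetric if and only if there exist linear forms c₁,…,c_r on V such that G(v,w) − G(w,v) = Σ_α (c_α(v)φ_α(w) − c_α(w)φ_α(v)) for all v,w ∈ V. -/
/-!
Put `A := G - G.flip` and pick `e_β ∈ V` dual to the `φ_α` (possible by linear independence),
so that `V = V₀ + span {e_β}`. A bilinear form vanishing on `V₀ × V₀`, on `e_β × V` and on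
`V × e_β` is zero. With `c_α := A(·, e_α) + ½ ∑_β A(e_α, e_β) φ_β`, the antisymmetric form
`A - ∑_α (c_α ⊗ φ_α - φ_α ⊗ c_α)` vanishes on `e_β × V` by direct computation, and on
`V₀ × V₀` exactly when `G` is symmetric there.
-/

open Finset

section

variable {k V ι : Type*} [Field k] [AddCommGroup V] [Module k V]

theorem LinearIndependent.surjective_pi [Finite ι] {φ : ι → V →ₗ[k] k}
    (hφ : LinearIndependent k φ) : Function.Surjective (LinearMap.pi φ) := by
  have h : LinearIndependent k (fun α => (φ α : V → k)) :=
    hφ.map' (LinearMap.ltoFun k V k k) (LinearMap.ker_eq_bot.mpr DFunLike.coe_injective)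
  rw [← span_flip_eq_top_iff_linearIndependent] at h
  rw [← LinearMap.range_eq_top, eq_top_iff, ← h, Submodule.span_le]
  rintro _ ⟨v, rfl⟩
  exact ⟨v, rfl⟩

variable [Fintype ι]

def wedgeSum (c φ : ι → V →ₗ[k] k) : V →ₗ[k] V →ₗ[k] k :=
  ∑ α, ((c α).smulRight (φ α) - (φ α).smulRight (c α))

@[simp]
theorem wedgeSum_apply (c φ : ι → V →ₗ[k] k) (v w : V) :
    wedgeSum c φ v w = ∑ α, (c α v * φ α w - c α w * φ α v) := by
  simp [wedgeSum, mul_comm]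

theorem wedgeSum_apply_swap (c φ : ι → V →ₗ[k] k) (v w : V) :
    wedgeSum c φ w v = -wedgeSum c φ v w := by
  simp only [wedgeSum_apply, ← sum_neg_distrib, neg_sub]

theorem wedgeSum_apply_eq_zero (c : ι → V →ₗ[k] k) {φ : ι → V →ₗ[k] k} {v w : V}
    (hv : ∀ α, φ α v = 0) (hw : ∀ α, φ α w = 0) : wedgeSum c φ v w = 0 := by
  simp [hv, hw]

variable [DecidableEq ι]

theorem LinearIndependent.exists_dual_family {φ : ι → V →ₗ[k] k} (hφ : LinearIndependent k φ) :
    ∃ e : ι → V, ∀ α β, φ α (e β) = if α = β then 1 else 0 := by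
  choose e he using fun β => hφ.surjective_pi (Pi.single β 1)
  refine ⟨e, fun α β => ?_⟩
  simpa [Pi.single_apply] using congr_fun (he β) α

variable {φ : ι → V →ₗ[k] k} {e : ι → V}

theorem LinearMap.eq_zero_of_dual_family {M : Type*} [AddCommGroup M] [Module k M]
    (he : ∀ α β, φ α (e β) = if α = β then 1 else 0)
    (f : V →ₗ[k] M) (h₀ : ∀ v, (∀ α, φ α v = 0) → f v = 0) (h₁ : ∀ β, f (e β) = 0) :
    f = 0 := by
  ext v
  have hker : ∀ α, φ α (v - ∑ β, φ β v • e β) = 0 := by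
    simp [he]
  calc f v = f (v - ∑ β, φ β v • e β) + ∑ β, φ β v • f (e β) := by simp
    _ = 0 := by simp [h₀ _ hker, h₁]

theorem LinearMap.eq_zero_of_dual_family₂ {M : Type*} [AddCommGroup M] [Module k M]
    (he : ∀ α β, φ α (e β) = if α = β then 1 else 0) (B : V →ₗ[k] V →ₗ[k] M)
    (h₀ : ∀ v w, (∀ α, φ α v = 0) → (∀ α, φ α w = 0) → B v w = 0)
    (hl : ∀ β w, B (e β) w = 0) (hr : ∀ v β, B v (e β) = 0) : B = 0 :=
  eq_zero_of_dual_family he B (fun v hv => eq_zero_of_dual_family he (B v) (h₀ v · hv) (hr v))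
    (fun β => LinearMap.ext (hl β))

theorem exists_wedgeSum_eq (h2 : (2 : k) ≠ 0) (he : ∀ α β, φ α (e β) = if α = β then 1 else 0)
    (A : V →ₗ[k] V →ₗ[k] k) (hA : ∀ v w, A w v = -A v w)
    (h₀ : ∀ v w, (∀ α, φ α v = 0) → (∀ α, φ α w = 0) → A v w = 0) :
    ∃ c : ι → V →ₗ[k] k, wedgeSum c φ = A := by
  let c : ι → V →ₗ[k] k := fun α => A.flip (e α) + (2⁻¹ : k) • ∑ β, A (e α) (e β) • φ β
  have hl : ∀ β w, wedgeSum c φ (e β) w = A (e β) w := by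
    intro β w
    have half : ∀ x : k, x + -(2⁻¹ * x) = 2⁻¹ * x := fun x => by
      linear_combination -x * inv_mul_cancel₀ h2
    simp [c, he, sum_sub_distrib, mul_sum, hA (e β), half, mul_assoc]
  refine ⟨c, Eq.symm (sub_eq_zero.mp (LinearMap.eq_zero_of_dual_family₂ he _ ?_ ?_ ?_))⟩
  · intro v w hv hw
    simp [h₀ v w hv hw, wedgeSum_apply_eq_zero c hv hw]
  · intro β w
    simp [hl]
  · intro v β
    rw [LinearMap.sub_apply, LinearMap.sub_apply, hA (e β) v, wedgeSum_apply_swap, hl,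
      sub_neg_eq_add, neg_add_cancel]

end

/-- Let `V` be a vector space over a field `k` of characteristic ≠ 2,
`G` a bilinear form on `V`, and `φ₁,…,φ_r` linearly independent linear forms on `V`
with common kernel `V₀`. The restriction of `G` to `V₀` is symmetric iff there exist
linear forms `c_α` with `G(v,w) − G(w,v) = Σ_α (c_α(v)φ_α(w) − c_α(w)φ_α(v))`. -/
theorem stmt0 {k V : Type*} [Field k] [AddCommGroup V] [Module k V]
    (hchar : (2 : k) ≠ 0) (r : ℕ)
    (G : V →ₗ[k] V →ₗ[k] k) (φ : Fin r → (V →ₗ[k] k))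
    (hφ : LinearIndependent k φ) :
    (∀ v w : V, (∀ α, φ α v = 0) → (∀ α, φ α w = 0) → G v w = G w v) ↔
      ∃ c : Fin r → (V →ₗ[k] k),
        ∀ v w : V, G v w - G w v = ∑ α, (c α v * φ α w - c α w * φ α v) := by
  constructor
  · intro hsym
    obtain ⟨e, he⟩ := hφ.exists_dual_family
    obtain ⟨c, hc⟩ := exists_wedgeSum_eq hchar he (G - G.flip) (fun v w => by simp)
      (fun v w hv hw => by simp [hsym v w hv hw])
    exact ⟨c, fun v w => by simpa using (LinearMap.congr_fun₂ hc v w).symm⟩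
  · rintro ⟨c, hc⟩ v w hv hw
    exact sub_eq_zero.mp ((hc v w).trans (by simp [hv, hw]))
end

section
/- Define q_n as the n-th Taylor coefficient (times n!) of Q(t) = (1−t)^{−(d/2−Δ)}(1+t)^{d/2+s−2} at t = 0, i.e. q_n = Σ_{m=0}^{n} C(n,m)(d/2−Δ)_m [d/2+s−2]_{n−m}, where (x)_m is the rising and [x]_k the falling factorial. Then q_n satisfies q_{n+2} − (d−Δ+s−2)q_{n+1} + (n+1)(Δ+s−(n+2))q_n = 0 for all n ≥ 0. -/
/-!
With `a = d/2 − Δ` and `b = d/2 + s − 2`, `Q = A B` where `A = (1 − t)^{−a} = Σ (a)_m t^m/m!` and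
`B = (1 + t)^b = Σ [b]_k t^k/k!`. The Pochhammer recursions say `(1 − t) A' = a A` and
`(1 + t) B' = b B`, hence `(1 − t²) Q' = (a (1 + t) + b (1 − t)) Q`. Comparing the coefficients of
`t^{n+1}/(n+1)!` gives `q_{n+2} = (a + b) q_{n+1} + (n + 1)(n + a − b) q_n`.
-/

open Finset

/-- The Taylor coefficients (times `n!`) of `(1−t)^{−(d/2−Δ)}(1+t)^{d/2+s−2}` at `t = 0`:
`q_n = Σ_{m=0}^{n} C(n,m) (d/2−Δ)_m [d/2+s−2]_{n−m}`. -/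
noncomputable def qCoef (d Δ s : ℝ) (n : ℕ) : ℝ :=
  ∑ m ∈ range (n + 1),
    (n.choose m : ℝ) * (ascPochhammer ℝ m).eval (d / 2 - Δ) *
      (descPochhammer ℝ (n - m)).eval (d / 2 + s - 2)

open PowerSeries Nat

section

variable {R : Type*} [CommRing R]

theorem coeff_X_mul_derivative (f : R⟦X⟧) (n : ℕ) :
    coeff n (X * d⁄dX R f) = n * coeff n f := by
  cases n with
  | zero => simp
  | succ n => rw [coeff_succ_X_mul, coeff_derivative, mul_comm]; push_cast; rfl

theorem derivative_mul_eq_of_derivative_eq {f g : R⟦X⟧} {a b : R}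
    (hf : (1 - X) * d⁄dX R f = C a * f) (hg : (1 + X) * d⁄dX R g = C b * g) :
    (1 - X ^ 2) * d⁄dX R (f * g) = (C a * (1 + X) + C b * (1 - X)) * (f * g) := by
  rw [Derivation.leibniz, smul_eq_mul, smul_eq_mul]
  linear_combination (1 + X) * g * hf + (1 - X) * f * hg

end

section

variable {K : Type*} [Field K]

noncomputable def egf (u : ℕ → K) : K⟦X⟧ := mk fun n ↦ u n / n !

def binomConv (u v : ℕ → K) (n : ℕ) : K :=
  ∑ m ∈ range (n + 1), (n.choose m : K) * u m * v (n - m)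

@[simp]
theorem coeff_egf (u : ℕ → K) (n : ℕ) : coeff n (egf u) = u n / n ! := coeff_mk _ _

variable [CharZero K]

theorem derivative_egf (u : ℕ → K) : d⁄dX K (egf u) = egf fun n ↦ u (n + 1) := by
  ext n
  rw [coeff_derivative, coeff_egf, coeff_egf, factorial_succ]
  push_cast
  field_simp

theorem egf_mul_egf (u v : ℕ → K) : egf u * egf v = egf (binomConv u v) := by
  ext n
  rw [coeff_mul, coeff_egf, binomConv, sum_div,
    Nat.sum_antidiagonal_eq_sum_range_succ_mk]
  refine sum_congr rfl fun m hm ↦ ?_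
  rw [coeff_egf, coeff_egf, cast_choose K (mem_range_succ_iff.mp hm)]
  field_simp
  exact (mul_div_mul_right _ _ (cast_ne_zero.mpr (factorial_ne_zero n))).symm

theorem one_sub_C_mul_X_mul_derivative_egf {u : ℕ → K} {a c : K}
    (hu : ∀ n, u (n + 1) = (a + c * n) * u n) :
    (1 - C c * X) * d⁄dX K (egf u) = C a * egf u := by
  ext n
  rw [sub_mul, one_mul, mul_assoc, map_sub, coeff_C_mul, coeff_X_mul_derivative, coeff_C_mul,
    derivative_egf, coeff_egf, coeff_egf, hu]
  ring

theorem one_sub_X_mul_derivative_egf_ascPochhammer (a : K) :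
    (1 - X) * d⁄dX K (egf fun m ↦ (ascPochhammer K m).eval a) =
      C a * egf fun m ↦ (ascPochhammer K m).eval a := by
  have h := one_sub_C_mul_X_mul_derivative_egf (a := a) (c := 1)
    (u := fun m ↦ (ascPochhammer K m).eval a) fun m ↦ by rw [ascPochhammer_succ_eval]; ring
  rwa [map_one, one_mul] at h

theorem one_add_X_mul_derivative_egf_descPochhammer (b : K) :
    (1 + X) * d⁄dX K (egf fun m ↦ (descPochhammer K m).eval b) =
      C b * egf fun m ↦ (descPochhammer K m).eval b := by
  have h := one_sub_C_mul_X_mul_derivative_egf (a := b) (c := -1)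
    (u := fun m ↦ (descPochhammer K m).eval b) fun m ↦ by rw [descPochhammer_succ_eval]; ring
  rwa [map_neg, map_one, neg_one_mul, sub_neg_eq_add] at h

theorem egf_recurrence_of_derivative_eq {q : ℕ → K} {a b : K}
    (hq : (1 - X ^ 2) * d⁄dX K (egf q) = (C a * (1 + X) + C b * (1 - X)) * egf q) (n : ℕ) :
    q (n + 2) = (a + b) * q (n + 1) + (n + 1) * (n + a - b) * q n := by
  have h := congrArg (coeff (n + 1)) hq
  simp only [sub_mul, one_mul, add_mul, mul_add, mul_sub, mul_one, pow_two, map_add, map_sub,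
    mul_assoc, coeff_succ_X_mul, coeff_X_mul_derivative, coeff_C_mul, coeff_egf] at h
  rw [derivative_egf, coeff_egf, factorial_succ, cast_mul] at h
  field_simp at h
  rw [div_left_inj' (cast_ne_zero.mpr (factorial_ne_zero n))] at h
  push_cast at h
  linear_combination h

end

/-- The coefficients `q_n` satisfy the recursion
`q_{n+2} − (d−Δ+s−2) q_{n+1} + (n+1)(Δ+s−(n+2)) q_n = 0` for all `n ≥ 0`. -/
theorem stmt7 (d Δ s : ℝ) (n : ℕ) :
    qCoef d Δ s (n + 2) - (d - Δ + s - 2) * qCoef d Δ s (n + 1)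
      + ((n : ℝ) + 1) * (Δ + s - ((n : ℝ) + 2)) * qCoef d Δ s n = 0 := by
  have hq := derivative_mul_eq_of_derivative_eq
    (one_sub_X_mul_derivative_egf_ascPochhammer (d / 2 - Δ))
    (one_add_X_mul_derivative_egf_descPochhammer (d / 2 + s - 2))
  rw [egf_mul_egf] at hq
  linear_combination egf_recurrence_of_derivative_eq (q := qCoef d Δ s) hq n
end

section
/- Let ν_n = q_n / [Δ+s−2]_n where q_n = Σ_{m=0}^{n} C(n,m)(d/2−Δ)_m [d/2+s−2]_{n−m} and [Δ+s−2]_n ≠ 0 for the relevant n. Then for all n ≥ 2, ((Δ+s−2)−(n−1))·ν_n − (d−Δ+s−2)·ν_{n−1} + (n−1)·ν_{n−2} = 0. -/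
/-!
Write `Q_k = Σ_m T_k(m)` with `T_k(m) = C(k,m) (a)_m [b]_{k-m}` and `M_k = Σ_m m T_k(m)`.
Pascal's rule together with `(a)_{m+1} = (a)_m (a+m)` and `[b]_{j+1} = [b]_j (b-j)` gives
`Q_{k+1} = (a+b-k) Q_k + 2 M_k`, and absorbing the weight `m` into the binomial coefficient gives
`M_{k+1} = (k+1) (a Q_k + M_k)`. Eliminating the moments yields the three-term recurrence
`Q_{n+2} = (a+b) Q_{n+1} - (n+1)(b-a-n) Q_n`, which for `a = d/2-Δ`, `b = d/2+s-2` becomes the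
claimed recurrence for `ν_n = q_n / [Δ+s-2]_n` after dividing by `[Δ+s-2]_{n+1}`.
-/

open Finset

namespace Pochhammer

variable {R : Type*} [CommRing R]

noncomputable def binomSum (a b : R) (k : ℕ) : R :=
  ∑ m ∈ range (k + 1),
    (k.choose m : R) * (ascPochhammer R m).eval a * (descPochhammer R (k - m)).eval b

noncomputable def binomMoment (a b : R) (k : ℕ) : R :=
  ∑ m ∈ range (k + 1),
    (m : R) * ((k.choose m : R) * (ascPochhammer R m).eval a * (descPochhammer R (k - m)).eval b)

theorem binomSum_succ (a b : R) (k : ℕ) :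
    binomSum a b (k + 1) = (a + b - k) * binomSum a b k + 2 * binomMoment a b k := by
  rw [binomSum]
  simp only [mul_assoc]
  rw [sum_choose_succ_mul
    (fun i j ↦ (ascPochhammer R i).eval a * (descPochhammer R j).eval b), ← sum_add_distrib,
    binomSum, binomMoment, mul_sum, mul_sum, ← sum_add_distrib]
  refine sum_congr rfl fun m hm ↦ ?_
  have hmk : m ≤ k := Nat.lt_succ_iff.mp (mem_range.mp hm)
  rw [Nat.sub_add_comm hmk, descPochhammer_succ_eval, ascPochhammer_succ_eval, Nat.cast_sub hmk]
  ring

theorem binomMoment_succ (a b : R) (k : ℕ) :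
    binomMoment a b (k + 1) = (k + 1) * (a * binomSum a b k + binomMoment a b k) := by
  rw [binomMoment, sum_range_succ', Nat.cast_zero, zero_mul, add_zero, binomSum, binomMoment,
    mul_sum, ← sum_add_distrib, mul_sum]
  refine sum_congr rfl fun m _ ↦ ?_
  have hchoose := congrArg (Nat.cast (R := R)) (Nat.add_one_mul_choose_eq k m)
  push_cast at hchoose
  rw [Nat.succ_sub_succ, ascPochhammer_succ_eval]
  push_cast
  linear_combination -hchoose * ((ascPochhammer R m).eval a * (a + m) *
    (descPochhammer R (k - m)).eval b)

theorem binomSum_add_two (a b : R) (n : ℕ) :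
    binomSum a b (n + 2) =
      (a + b) * binomSum a b (n + 1) - (n + 1) * (b - a - n) * binomSum a b n := by
  have h₁ := binomSum_succ a b (n + 1)
  have h₀ := binomSum_succ a b n
  rw [binomMoment_succ] at h₁
  push_cast at h₁
  linear_combination h₁ - (n + 1) * h₀

end Pochhammer

theorem qCoef_eq_binomSum (d Δ s : ℝ) (n : ℕ) :
    qCoef d Δ s n = Pochhammer.binomSum (d / 2 - Δ) (d / 2 + s - 2) n := rfl

-- The paper's index `n ≥ 2` is `n + 2` here.
/-- Let `ν_n = q_n / [Δ+s−2]_n` with `[Δ+s−2]_k ≠ 0` for all `k ≤ n+2`.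
Then (writing `n+2` for the index `n ≥ 2` of the informal statement)
`((Δ+s−2)−(n+1))·ν_{n+2} − (d−Δ+s−2)·ν_{n+1} + (n+1)·ν_n = 0`. -/
theorem stmt8 (d Δ s : ℝ) (n : ℕ)
    (hden : ∀ k ≤ n + 2, (descPochhammer ℝ k).eval (Δ + s - 2) ≠ 0)
    (ν : ℕ → ℝ)
    (hν : ∀ k : ℕ, ν k = qCoef d Δ s k / (descPochhammer ℝ k).eval (Δ + s - 2)) :
    ((Δ + s - 2) - ((n : ℝ) + 1)) * ν (n + 2) - (d - Δ + s - 2) * ν (n + 1)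
      + ((n : ℝ) + 1) * ν n = 0 := by
  have hD₁ : (descPochhammer ℝ (n + 1)).eval (Δ + s - 2) =
      (descPochhammer ℝ n).eval (Δ + s - 2) * (Δ + s - 2 - n) :=
    descPochhammer_succ_eval n _
  have hD₂ : (descPochhammer ℝ (n + 2)).eval (Δ + s - 2) =
      (descPochhammer ℝ (n + 1)).eval (Δ + s - 2) * (Δ + s - 2 - (n + 1)) := by
    exact_mod_cast descPochhammer_succ_eval (n + 1) (Δ + s - 2)
  obtain ⟨hne₁, hc₂⟩ := mul_ne_zero_iff.mp (hD₂ ▸ hden (n + 2) le_rfl)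
  obtain ⟨hne₀, hc₁⟩ := mul_ne_zero_iff.mp (hD₁ ▸ hne₁)
  have hrec := Pochhammer.binomSum_add_two (d / 2 - Δ) (d / 2 + s - 2) n
  simp only [← qCoef_eq_binomSum] at hrec
  rw [hν, hν, hν, hD₂, hD₁]
  field_simp
  linear_combination hrec
end

section
/- Let ν_n^{(Δ)} = ([d/2+s−2]_n / [Δ+s−2]_n) · ₂F₁(−n, d/2−Δ; d/2+s−1−n; −1) with d, s fixed and Δ = Δ_ℓ depending on a parameter ℓ such that Δ_ℓ/ℓ → m ≠ 0 as ℓ → ∞. Then for each fixed n and s, ν_n^{(Δ_ℓ)} → (−1)^n as ℓ → ∞. -/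
/-!
Write `(d/2 − Δ)_k = (−1)^k [Δ − d/2]_k`. A ratio `[Δ + a]_k / [Δ + b]_n` with `k ≤ n` is a
product of `k` factors tending to `1` and `n − k` factors tending to `0` as `|Δ| → ∞`, so only the
top term `k = n` of the hypergeometric sum survives. Its coefficient is `(−1)^n`: the prefactor
`[d/2+s−2]_n = (d/2+s−1−n)_n` cancels the lower parameter, and `(−n)_n = (−1)^n n!` cancels `n!`.
-/

open Finset Filter Topology Bornology

lemma tendsto_cobounded_of_tendsto_div_natCast {Δ : ℕ → ℝ} {m : ℝ} (hm : m ≠ 0)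
    (hΔ : Tendsto (fun ℓ : ℕ => Δ ℓ / (ℓ : ℝ)) atTop (𝓝 m)) :
    Tendsto Δ atTop (cobounded ℝ) := by
  rw [← tendsto_norm_atTop_iff_cobounded]
  have hprod : Tendsto (fun ℓ : ℕ => ‖Δ ℓ / (ℓ : ℝ)‖ * (ℓ : ℝ)) atTop atTop :=
    Tendsto.pos_mul_atTop (norm_pos_iff.mpr hm) hΔ.norm tendsto_natCast_atTop_atTop
  refine hprod.congr' ?_
  filter_upwards [eventually_ne_atTop 0] with ℓ hℓ
  rw [norm_div, Real.norm_natCast, div_mul_cancel₀ _ (Nat.cast_ne_zero.mpr hℓ)]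

lemma ascPochhammer_eval_neg_natCast_self {R : Type*} [CommRing R] (n : ℕ) :
    (ascPochhammer R n).eval (-(n : R)) = (-1) ^ n * n.factorial := by
  rw [ascPochhammer_eval_neg_eq_descPochhammer, descPochhammer_eval_eq_descFactorial,
    Nat.descFactorial_self]

lemma ascPochhammer_eval_sub_mul_neg_one_pow {R : Type*} [CommRing R] (a x : R) (k : ℕ) :
    (ascPochhammer R k).eval (a - x) * (-1) ^ k = (descPochhammer R k).eval (x + -a) := by
  rw [show a - x = -(x + -a) by ring, ascPochhammer_eval_neg_eq_descPochhammer, mul_comm,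
    ← mul_assoc, ← mul_pow, neg_one_mul, neg_neg, one_pow, one_mul]

section CoboundedLimits

variable {α : Type*} {l : Filter α} {f : α → ℝ}

lemma tendsto_inv_add_const_of_cobounded (hf : Tendsto f l (cobounded ℝ)) (b : ℝ) :
    Tendsto (fun x => (f x + b)⁻¹) l (𝓝 0) :=
  tendsto_inv₀_cobounded.comp ((tendsto_add_const_cobounded b).comp hf)

lemma tendsto_add_const_div_add_const_of_cobounded (hf : Tendsto f l (cobounded ℝ))
    (a b : ℝ) : Tendsto (fun x => (f x + a) / (f x + b)) l (𝓝 1) := by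
  have hlim := ((tendsto_inv_add_const_of_cobounded hf b).const_mul (a - b)).const_add 1
  rw [mul_zero, add_zero] at hlim
  refine hlim.congr' ?_
  filter_upwards [((tendsto_add_const_cobounded b).comp hf).eventually_ne_cobounded 0]
    with x hx
  simp only [Function.comp_apply] at hx
  field_simp
  ring

lemma tendsto_descPochhammer_div_descPochhammer_of_cobounded
    (hf : Tendsto f l (cobounded ℝ)) (a b : ℝ) {k n : ℕ} (hk : k ≤ n) :
    Tendsto
      (fun x => (descPochhammer ℝ k).eval (f x + a) / (descPochhammer ℝ n).eval (f x + b))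
      l (𝓝 (if k = n then 1 else 0)) := by
  have hprod : ∀ x,
      (descPochhammer ℝ k).eval (f x + a) / (descPochhammer ℝ n).eval (f x + b) =
        (∏ j ∈ range k, (f x + (a - j)) / (f x + (b - j))) *
          ∏ j ∈ Ico k n, (f x + (b - j))⁻¹ := by
    intro x
    simp only [descPochhammer_eval_eq_prod_range, ← add_sub_assoc]
    rw [← prod_range_mul_prod_Ico _ hk, prod_div_distrib, prod_inv_distrib, div_mul_eq_div_div,
      div_eq_mul_inv]
  have hlim : Tendsto (fun x => (∏ j ∈ range k, (f x + (a - j)) / (f x + (b - j))) *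
      ∏ j ∈ Ico k n, (f x + (b - j))⁻¹) l (𝓝 ((∏ _ ∈ range k, 1) * ∏ _ ∈ Ico k n, 0)) :=
    (tendsto_finsetProd _ fun j _ => tendsto_add_const_div_add_const_of_cobounded hf _ _).mul
      (tendsto_finsetProd _ fun j _ => tendsto_inv_add_const_of_cobounded hf _)
  have hvalue :
      ((∏ _ ∈ range k, (1 : ℝ)) * ∏ _ ∈ Ico k n, (0 : ℝ)) = if k = n then 1 else 0 := by
    rcases hk.eq_or_lt with rfl | hlt
    · simp
    · rw [if_neg hlt.ne, prod_const_one, one_mul, prod_const, Nat.card_Ico,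
        zero_pow (Nat.sub_ne_zero_of_lt hlt)]
  simpa only [hprod, hvalue] using hlim

end CoboundedLimits

/-- With `d, s` fixed reals, `n` a fixed natural (such that the lower
Pochhammer parameter `d/2+s−1−n` is nondegenerate), and `Δ_ℓ` a real sequence with
`Δ_ℓ/ℓ → m ≠ 0`, the coefficients
`ν_n^{(Δ)} = ([d/2+s−2]_n / [Δ+s−2]_n) · ₂F₁(−n, d/2−Δ; d/2+s−1−n; −1)`
tend to `(−1)^n` as `ℓ → ∞`. -/
theorem stmt9 (d s : ℝ) (n : ℕ)
    (hc : ∀ k ≤ n, (ascPochhammer ℝ k).eval (d / 2 + s - 1 - (n : ℝ)) ≠ 0)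
    (Δ : ℕ → ℝ) (m : ℝ) (hm : m ≠ 0)
    (hΔ : Tendsto (fun ℓ : ℕ => Δ ℓ / (ℓ : ℝ)) atTop (nhds m)) :
    Tendsto
      (fun ℓ : ℕ =>
        ((descPochhammer ℝ n).eval (d / 2 + s - 2) /
            (descPochhammer ℝ n).eval (Δ ℓ + s - 2)) *
          ∑ k ∈ range (n + 1),
            (ascPochhammer ℝ k).eval (-(n : ℝ)) * (ascPochhammer ℝ k).eval (d / 2 - Δ ℓ) /
                ((ascPochhammer ℝ k).eval (d / 2 + s - 1 - (n : ℝ)) * (k.factorial : ℝ)) *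
              (-1) ^ k)
      atTop (nhds ((-1) ^ n)) := by
  set C : ℕ → ℝ := fun k => (descPochhammer ℝ n).eval (d / 2 + s - 2) *
    (ascPochhammer ℝ k).eval (-(n : ℝ)) /
      ((ascPochhammer ℝ k).eval (d / 2 + s - 1 - n) * k.factorial)
  have hlim : Tendsto (fun ℓ => ∑ k ∈ range (n + 1), C k *
      ((descPochhammer ℝ k).eval (Δ ℓ + -(d / 2)) / (descPochhammer ℝ n).eval (Δ ℓ + (s - 2))))
      atTop (𝓝 (∑ k ∈ range (n + 1), C k * if k = n then 1 else 0)) :=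
    tendsto_finsetSum _ fun k hk => .const_mul (C k) <|
      tendsto_descPochhammer_div_descPochhammer_of_cobounded
        (tendsto_cobounded_of_tendsto_div_natCast hm hΔ) _ _ (mem_range_succ_iff.mp hk)
  have hCn : C n = (-1) ^ n := by
    have hnum : (descPochhammer ℝ n).eval (d / 2 + s - 2) =
        (ascPochhammer ℝ n).eval (d / 2 + s - 1 - n) := by
      rw [descPochhammer_eval_eq_ascPochhammer]
      ring_nf
    simp only [C, hnum, ascPochhammer_eval_neg_natCast_self]
    rw [mul_div_mul_left _ _ (hc n le_rfl),
      mul_div_cancel_right₀ _ (Nat.cast_ne_zero.mpr n.factorial_ne_zero)]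
  simp only [mul_ite, mul_one, mul_zero, sum_ite_eq', self_mem_range_succ, if_true, hCn] at hlim
  refine hlim.congr fun ℓ => ?_
  rw [mul_sum]
  refine sum_congr rfl fun k _ => ?_
  rw [← ascPochhammer_eval_sub_mul_neg_one_pow, show Δ ℓ + s - 2 = Δ ℓ + (s - 2) by ring]
  ring
end

section
/- Consider operators on polynomials in variables P^A (A = 0,…,d+1) and an odd pair (b,c), with S = ∂_P·∂_X, S† = −P·∂_X acting on smooth-coefficient polynomials, T₁ = X·∂_P + 2c₀∂_c, T₂ = ∂_P·∂_P + 2∂_b∂_c, N = P·∂_P + b∂_b + c∂_c, h = −X·∂_X − 2c₀∂_{c₀} + b∂_b − c∂_c, and Ω = c₀□ + cS + S†∂_b + c∂_b∂_{c₀} where □ = ∂_X·∂_X. Then the following (anti)commutation relations hold: [Ω,T₂] = 0, [h,T₁] = −T₁, [h,T₂] = 0, [N,T₁] = −T₁, [N,T₂] = −2T₂, [T₁,T₂] = 0, and [Ω,T₁] = −∂_b(h+N−2) + cT₂. -/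
/-!
`h` and `N` act by `ad` as gradings. Every generator occurring in `T₁` and `T₂` is an
`ad`-eigenvector of both: a ghost bilinear `x ∂_x` gives `x` weight `+1` and `∂_x` weight `-1`
and commutes with everything else. Since `T₁` and `T₂` are sums of products of generators of
constant total weight, this gives the four relations with `h` and `N`. The other three follow
from the Leibniz rule, using that ghosts commute with the ambient operators and, between ghosts,
the graded Leibniz rule `⁅a, b c⁆ = {a, b} c - b {a, c}`. In `[Ω, T₁]` the `h + N`-weight `-2`
of `∂_b` turns `∂_b (h + N - 2)` into `(h + N) ∂_b`.
-/

section

attribute [local instance] LieRing.ofAssociativeRing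

section Leibniz

variable {A : Type*} [Ring A] {a b c : A}

def Anticommute (a b : A) : Prop := a * b + b * a = 0

theorem Anticommute.symm (h : Anticommute a b) : Anticommute b a := by
  rw [Anticommute, add_comm]; exact h

theorem anticommute_self_of_mul_self_eq_zero (h : a * a = 0) : Anticommute a a := by
  rw [Anticommute, h, add_zero]

theorem Ring.mul_lie (a b c : A) : ⁅a * b, c⁆ = a * ⁅b, c⁆ + ⁅a, c⁆ * b := by
  simp only [Ring.lie_def]; noncomm_ring

theorem Ring.lie_mul (a b c : A) : ⁅a, b * c⁆ = ⁅a, b⁆ * c + b * ⁅a, c⁆ := by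
  simp only [Ring.lie_def]; noncomm_ring

theorem Ring.lie_mul_eq_anticomm (a b c : A) :
    ⁅a, b * c⁆ = (a * b + b * a) * c - b * (a * c + c * a) := by
  simp only [Ring.lie_def]; noncomm_ring

theorem commute_mul_of_anticommute (hb : Anticommute a b) (hc : Anticommute a c) :
    Commute a (b * c) := by
  rw [commute_iff_lie_eq, Ring.lie_mul_eq_anticomm, hb, hc, zero_mul, mul_zero, sub_zero]

theorem lie_mul_eq_neg_of_anticommute (hb : Anticommute a b) (hc : a * c + c * a = 1) :
    ⁅a, b * c⁆ = -b := by
  rw [Ring.lie_mul_eq_anticomm, hb, hc, zero_mul, mul_one, zero_sub]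

theorem lie_mul_eq_of_anticommute (hb : a * b + b * a = 1) (hc : Anticommute a c) :
    ⁅a, b * c⁆ = c := by
  rw [Ring.lie_mul_eq_anticomm, hb, hc, one_mul, mul_zero, sub_zero]

end Leibniz

section AdWeight

variable {A : Type*} [Ring A] {D E x y : A} {k l : ℤ}

def HasAdWeight (D x : A) (k : ℤ) : Prop := ⁅D, x⁆ = k • x

theorem Commute.hasAdWeight_zero (h : Commute D x) : HasAdWeight D x 0 := by
  rw [HasAdWeight, zero_smul]; exact h.lie_eq

namespace HasAdWeight

theorem mul (hx : HasAdWeight D x k) (hy : HasAdWeight D y l) :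
    HasAdWeight D (x * y) (k + l) := by
  rw [HasAdWeight, Ring.lie_mul, hx, hy, smul_mul_assoc, mul_smul_comm, add_smul]

theorem add (hx : HasAdWeight D x k) (hy : HasAdWeight D y k) : HasAdWeight D (x + y) k := by
  rw [HasAdWeight, lie_add, hx, hy, smul_add]

theorem two_mul (hx : HasAdWeight D x k) : HasAdWeight D (2 * x) k := by
  rw [_root_.two_mul]; exact hx.add hx

theorem add_left (hD : HasAdWeight D x k) (hE : HasAdWeight E x l) :
    HasAdWeight (D + E) x (k + l) := by
  rw [HasAdWeight, add_lie, hD, hE, add_smul]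

theorem neg_left (hD : HasAdWeight D x k) : HasAdWeight (-D) x (-k) := by
  rw [HasAdWeight, neg_lie, hD, neg_smul]

theorem sub_left (hD : HasAdWeight D x k) (hE : HasAdWeight E x l) :
    HasAdWeight (D - E) x (k - l) := by
  rw [HasAdWeight, sub_lie, hD, hE, sub_smul]

theorem two_mul_left (hD : HasAdWeight D x k) : HasAdWeight (2 * D) x (2 * k) := by
  rw [_root_.two_mul, _root_.two_mul]; exact hD.add_left hD

theorem mul_add_intCast (h : HasAdWeight D x k) : x * (D + k) = D * x := by
  have hlie : D * x - x * D = k • x := h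
  rw [zsmul_eq_mul] at hlie
  rw [mul_add, ← (Int.cast_commute k x).eq, ← hlie]
  abel

end HasAdWeight

theorem hasAdWeight_mul_left_self (hx : x * x = 0) (hxy : x * y + y * x = 1) :
    HasAdWeight (x * y) x 1 := by
  rw [HasAdWeight, ← lie_skew,
    lie_mul_eq_neg_of_anticommute (anticommute_self_of_mul_self_eq_zero hx) hxy, neg_neg, one_smul]

theorem hasAdWeight_mul_right_self (hy : y * y = 0) (hxy : x * y + y * x = 1) :
    HasAdWeight (x * y) y (-1) := by
  rw [HasAdWeight, ← lie_skew, lie_mul_eq_of_anticommute (by rwa [add_comm])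
    (anticommute_self_of_mul_self_eq_zero hy), neg_one_smul]

theorem hasAdWeight_mul_of_anticommute {z : A} (hx : Anticommute z x) (hy : Anticommute z y) :
    HasAdWeight (x * y) z 0 :=
  (commute_mul_of_anticommute hx hy).symm.hasAdWeight_zero

end AdWeight

/-- `Box = □`, `S = ∂_P·∂_X`, `Sd = S† = -P·∂_X`, `XdP = X·∂_P`, `PdP = P·∂_P`, `XdX = X·∂_X`,
`T2e = ∂_P·∂_P`; `Mc0, Mc, Mb` multiply by `c₀, c, b` and `Dc0, Dc, Db` are `∂_{c₀}, ∂_c, ∂_b`. -/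
structure AmbientGhostOperators (A : Type*) [Ring A] where
  (Box S Sd XdP PdP XdX T2e : A)
  (Mc0 Mc Mb Dc0 Dc Db : A)
  lie_Box_XdP : ⁅Box, XdP⁆ = 2 * S
  commute_Box_T2e : Commute Box T2e
  lie_S_XdP : ⁅S, XdP⁆ = T2e
  lie_Sd_XdP : ⁅Sd, XdP⁆ = XdX - PdP
  lie_XdX_XdP : ⁅XdX, XdP⁆ = XdP
  commute_XdX_T2e : Commute XdX T2e
  lie_PdP_XdP : ⁅PdP, XdP⁆ = -XdP
  lie_PdP_T2e : ⁅PdP, T2e⁆ = -(2 * T2e)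
  commute_S_T2e : Commute S T2e
  lie_Sd_T2e : ⁅Sd, T2e⁆ = 2 * S
  commute_XdP_T2e : Commute XdP T2e
  ghost_commute_even : ∀ g ∈ [Mc0, Mc, Mb, Dc0, Dc, Db],
    ∀ e ∈ [Box, S, Sd, XdP, PdP, XdX, T2e], Commute g e
  Mc0_mul_self : Mc0 * Mc0 = 0
  Dc_mul_self : Dc * Dc = 0
  Db_mul_self : Db * Db = 0
  anticomm_Mc0_Dc0 : Mc0 * Dc0 + Dc0 * Mc0 = 1
  anticomm_Mc_Dc : Mc * Dc + Dc * Mc = 1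
  anticomm_Mb_Db : Mb * Db + Db * Mb = 1
  anticommute_Mc0_Mc : Anticommute Mc0 Mc
  anticommute_Mc0_Mb : Anticommute Mc0 Mb
  anticommute_Mc0_Dc : Anticommute Mc0 Dc
  anticommute_Mc0_Db : Anticommute Mc0 Db
  anticommute_Mc_Db : Anticommute Mc Db
  anticommute_Mb_Dc : Anticommute Mb Dc
  anticommute_Dc0_Dc : Anticommute Dc0 Dc
  anticommute_Dc0_Db : Anticommute Dc0 Db
  anticommute_Dc_Db : Anticommute Dc Db

namespace AmbientGhostOperators

variable {A : Type*} [Ring A] (O : AmbientGhostOperators A)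

def T₁ : A := O.XdP + 2 * (O.Mc0 * O.Dc)

def T₂ : A := O.T2e + 2 * (O.Db * O.Dc)

def N : A := O.PdP + O.Mb * O.Db + O.Mc * O.Dc

def h : A := -O.XdX - 2 * (O.Mc0 * O.Dc0) + O.Mb * O.Db - O.Mc * O.Dc

def Ω : A := O.Mc0 * O.Box + O.Mc * O.S + O.Sd * O.Db + O.Mc * (O.Db * O.Dc0)

def ghosts : List A := [O.Mc0, O.Mc, O.Mb, O.Dc0, O.Dc, O.Db]

def evens : List A := [O.Box, O.S, O.Sd, O.XdP, O.PdP, O.XdX, O.T2e]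

theorem commute_ghost_even {g e : A} (hg : g ∈ O.ghosts := by simp [ghosts])
    (he : e ∈ O.evens := by simp [evens]) : Commute g e :=
  O.ghost_commute_even g hg e he

theorem commute_ghost_mul_even {g g' e : A} (hg : g ∈ O.ghosts := by simp [ghosts])
    (hg' : g' ∈ O.ghosts := by simp [ghosts]) (he : e ∈ O.evens := by simp [evens]) :
    Commute (g * g') e :=
  (O.commute_ghost_even hg he).mul_left (O.commute_ghost_even hg' he)

variable {O}

theorem hasAdWeight_h {x : A} {k₁ k₂ k₃ k₄ k : ℤ} (h₁ : HasAdWeight O.XdX x k₁)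
    (h₂ : HasAdWeight (O.Mc0 * O.Dc0) x k₂) (h₃ : HasAdWeight (O.Mb * O.Db) x k₃)
    (h₄ : HasAdWeight (O.Mc * O.Dc) x k₄) (hk : -k₁ - 2 * k₂ + k₃ - k₄ = k) :
    HasAdWeight O.h x k :=
  hk ▸ ((h₁.neg_left.sub_left h₂.two_mul_left).add_left h₃).sub_left h₄

theorem hasAdWeight_N {x : A} {k₁ k₂ k₃ k : ℤ} (h₁ : HasAdWeight O.PdP x k₁)
    (h₂ : HasAdWeight (O.Mb * O.Db) x k₂) (h₃ : HasAdWeight (O.Mc * O.Dc) x k₃)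
    (hk : k₁ + k₂ + k₃ = k) : HasAdWeight O.N x k :=
  hk ▸ (h₁.add_left h₂).add_left h₃

theorem hasAdWeight_T₁ {D : A} {k₁ k₂ k₃ : ℤ} (h₁ : HasAdWeight D O.XdP k₁)
    (h₂ : HasAdWeight D O.Mc0 k₂) (h₃ : HasAdWeight D O.Dc k₃) (hk : k₂ + k₃ = k₁) :
    HasAdWeight D O.T₁ k₁ :=
  h₁.add (hk ▸ h₂.mul h₃).two_mul

theorem hasAdWeight_T₂ {D : A} {k₁ k₂ k₃ : ℤ} (h₁ : HasAdWeight D O.T2e k₁)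
    (h₂ : HasAdWeight D O.Db k₂) (h₃ : HasAdWeight D O.Dc k₃) (hk : k₂ + k₃ = k₁) :
    HasAdWeight D O.T₂ k₁ :=
  h₁.add (hk ▸ h₂.mul h₃).two_mul

variable (O)

theorem hasAdWeight_ghost_mul_even {g g' e : A} (hg : g ∈ O.ghosts := by simp [ghosts])
    (hg' : g' ∈ O.ghosts := by simp [ghosts]) (he : e ∈ O.evens := by simp [evens]) :
    HasAdWeight (g * g') e 0 :=
  (O.commute_ghost_mul_even hg hg' he).hasAdWeight_zero

theorem hasAdWeight_even_ghost {e g : A} (he : e ∈ O.evens := by simp [evens])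
    (hg : g ∈ O.ghosts := by simp [ghosts]) : HasAdWeight e g 0 :=
  (O.commute_ghost_even hg he).symm.hasAdWeight_zero

variable {O}

theorem hasAdWeight_XdX_XdP : HasAdWeight O.XdX O.XdP 1 := by
  rw [HasAdWeight, O.lie_XdX_XdP, one_smul]

theorem hasAdWeight_PdP_XdP : HasAdWeight O.PdP O.XdP (-1) := by
  rw [HasAdWeight, O.lie_PdP_XdP, neg_one_smul]

theorem hasAdWeight_PdP_T2e : HasAdWeight O.PdP O.T2e (-2) := by
  rw [HasAdWeight, O.lie_PdP_T2e, neg_smul, two_smul, two_mul]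

theorem hasAdWeight_h_XdP : HasAdWeight O.h O.XdP (-1) :=
  hasAdWeight_h hasAdWeight_XdX_XdP O.hasAdWeight_ghost_mul_even
    O.hasAdWeight_ghost_mul_even
    O.hasAdWeight_ghost_mul_even (by norm_num)

theorem hasAdWeight_h_T2e : HasAdWeight O.h O.T2e 0 :=
  hasAdWeight_h O.commute_XdX_T2e.hasAdWeight_zero
    O.hasAdWeight_ghost_mul_even
    O.hasAdWeight_ghost_mul_even
    O.hasAdWeight_ghost_mul_even (by norm_num)

theorem hasAdWeight_h_Mc0 : HasAdWeight O.h O.Mc0 (-2) :=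
  hasAdWeight_h O.hasAdWeight_even_ghost
    (hasAdWeight_mul_left_self O.Mc0_mul_self O.anticomm_Mc0_Dc0)
    (hasAdWeight_mul_of_anticommute O.anticommute_Mc0_Mb O.anticommute_Mc0_Db)
    (hasAdWeight_mul_of_anticommute O.anticommute_Mc0_Mc O.anticommute_Mc0_Dc) (by norm_num)

theorem hasAdWeight_h_Dc : HasAdWeight O.h O.Dc 1 :=
  hasAdWeight_h O.hasAdWeight_even_ghost
    (hasAdWeight_mul_of_anticommute O.anticommute_Mc0_Dc.symm O.anticommute_Dc0_Dc.symm)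
    (hasAdWeight_mul_of_anticommute O.anticommute_Mb_Dc.symm O.anticommute_Dc_Db)
    (hasAdWeight_mul_right_self O.Dc_mul_self O.anticomm_Mc_Dc) (by norm_num)

theorem hasAdWeight_h_Db : HasAdWeight O.h O.Db (-1) :=
  hasAdWeight_h O.hasAdWeight_even_ghost
    (hasAdWeight_mul_of_anticommute O.anticommute_Mc0_Db.symm O.anticommute_Dc0_Db.symm)
    (hasAdWeight_mul_right_self O.Db_mul_self O.anticomm_Mb_Db)
    (hasAdWeight_mul_of_anticommute O.anticommute_Mc_Db.symm O.anticommute_Dc_Db.symm)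
    (by norm_num)

theorem hasAdWeight_N_XdP : HasAdWeight O.N O.XdP (-1) :=
  hasAdWeight_N hasAdWeight_PdP_XdP O.hasAdWeight_ghost_mul_even
    O.hasAdWeight_ghost_mul_even (by norm_num)

theorem hasAdWeight_N_T2e : HasAdWeight O.N O.T2e (-2) :=
  hasAdWeight_N hasAdWeight_PdP_T2e O.hasAdWeight_ghost_mul_even
    O.hasAdWeight_ghost_mul_even (by norm_num)

theorem hasAdWeight_N_Mc0 : HasAdWeight O.N O.Mc0 0 :=
  hasAdWeight_N O.hasAdWeight_even_ghost
    (hasAdWeight_mul_of_anticommute O.anticommute_Mc0_Mb O.anticommute_Mc0_Db)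
    (hasAdWeight_mul_of_anticommute O.anticommute_Mc0_Mc O.anticommute_Mc0_Dc) (by norm_num)

theorem hasAdWeight_N_Dc : HasAdWeight O.N O.Dc (-1) :=
  hasAdWeight_N O.hasAdWeight_even_ghost
    (hasAdWeight_mul_of_anticommute O.anticommute_Mb_Dc.symm O.anticommute_Dc_Db)
    (hasAdWeight_mul_right_self O.Dc_mul_self O.anticomm_Mc_Dc) (by norm_num)

theorem hasAdWeight_N_Db : HasAdWeight O.N O.Db (-1) :=
  hasAdWeight_N O.hasAdWeight_even_ghost
    (hasAdWeight_mul_right_self O.Db_mul_self O.anticomm_Mb_Db)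
    (hasAdWeight_mul_of_anticommute O.anticommute_Mc_Db.symm O.anticommute_Dc_Db.symm)
    (by norm_num)

theorem lie_h_T₁ : ⁅O.h, O.T₁⁆ = -O.T₁ := by
  rw [← neg_one_smul ℤ O.T₁]
  exact hasAdWeight_T₁ hasAdWeight_h_XdP hasAdWeight_h_Mc0 hasAdWeight_h_Dc (by norm_num)

theorem lie_h_T₂ : ⁅O.h, O.T₂⁆ = 0 := by
  rw [← zero_smul ℤ O.T₂]
  exact hasAdWeight_T₂ hasAdWeight_h_T2e hasAdWeight_h_Db hasAdWeight_h_Dc (by norm_num)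

theorem lie_N_T₁ : ⁅O.N, O.T₁⁆ = -O.T₁ := by
  rw [← neg_one_smul ℤ O.T₁]
  exact hasAdWeight_T₁ hasAdWeight_N_XdP hasAdWeight_N_Mc0 hasAdWeight_N_Dc (by norm_num)

theorem lie_N_T₂ : ⁅O.N, O.T₂⁆ = -(2 * O.T₂) := by
  rw [show -(2 * O.T₂) = (-2 : ℤ) • O.T₂ by rw [neg_smul, two_smul, two_mul]]
  exact hasAdWeight_T₂ hasAdWeight_N_T2e hasAdWeight_N_Db hasAdWeight_N_Dc (by norm_num)

variable (O)

theorem lie_Ω_of_even {e : A} (he : e ∈ O.evens := by simp [evens]) :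
    ⁅O.Ω, e⁆ = O.Mc0 * ⁅O.Box, e⁆ + O.Mc * ⁅O.S, e⁆ + ⁅O.Sd, e⁆ * O.Db := by
  have hghost : ∀ g ∈ O.ghosts, ⁅g, e⁆ = 0 :=
    fun g hg => (O.commute_ghost_even hg he).lie_eq
  simp only [ghosts, List.forall_mem_cons] at hghost
  simp [Ω, Ring.mul_lie, hghost]

theorem lie_Ω_of_ghost_mul {g g' : A} (hg : g ∈ O.ghosts := by simp [ghosts])
    (hg' : g' ∈ O.ghosts := by simp [ghosts]) :
    ⁅O.Ω, g * g'⁆ = ⁅O.Mc0, g * g'⁆ * O.Box + ⁅O.Mc, g * g'⁆ * O.S +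
      O.Sd * ⁅O.Db, g * g'⁆ + ⁅O.Mc * (O.Db * O.Dc0), g * g'⁆ := by
  have heven : ∀ e ∈ O.evens, ⁅e, g * g'⁆ = 0 :=
    fun e he => (O.commute_ghost_mul_even hg hg' he).symm.lie_eq
  simp only [evens, List.forall_mem_cons] at heven
  simp [Ω, Ring.mul_lie, heven]

theorem lie_Ω_T₂ : ⁅O.Ω, O.T₂⁆ = 0 := by
  have hT2e : ⁅O.Ω, O.T2e⁆ = 2 * O.S * O.Db := by
    rw [O.lie_Ω_of_even, O.commute_Box_T2e.lie_eq, O.commute_S_T2e.lie_eq, O.lie_Sd_T2e,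
      mul_zero, mul_zero, zero_add, zero_add]
  have hDbDc : ⁅O.Ω, O.Db * O.Dc⁆ = -(O.Db * O.S) := by
    have hMc0 : ⁅O.Mc0, O.Db * O.Dc⁆ = 0 :=
      (commute_mul_of_anticommute O.anticommute_Mc0_Db O.anticommute_Mc0_Dc).lie_eq
    have hMc : ⁅O.Mc, O.Db * O.Dc⁆ = -O.Db :=
      lie_mul_eq_neg_of_anticommute O.anticommute_Mc_Db O.anticomm_Mc_Dc
    have hDb : ⁅O.Db, O.Db * O.Dc⁆ = 0 := (commute_mul_of_anticommute
      (anticommute_self_of_mul_self_eq_zero O.Db_mul_self) O.anticommute_Dc_Db.symm).lie_eq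
    have hDc0 : ⁅O.Dc0, O.Db * O.Dc⁆ = 0 :=
      (commute_mul_of_anticommute O.anticommute_Dc0_Db O.anticommute_Dc0_Dc).lie_eq
    rw [O.lie_Ω_of_ghost_mul, Ring.mul_lie, Ring.mul_lie, hMc0, hMc, hDb, hDc0]
    simp [← mul_assoc, O.Db_mul_self]
  have hDbS : Commute O.Db O.S := O.commute_ghost_even
  rw [T₂, lie_add, two_mul, lie_add, hT2e, hDbDc, hDbS.eq]
  noncomm_ring

theorem Db_mul_h_add_N_sub_two : O.Db * (O.h + O.N - 2) = (O.h + O.N) * O.Db := by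
  have hDb : HasAdWeight (O.h + O.N) O.Db (-2) := hasAdWeight_h_Db.add_left hasAdWeight_N_Db
  simpa [sub_eq_add_neg] using hDb.mul_add_intCast

theorem h_add_N_mul_Db :
    (O.h + O.N) * O.Db = -((O.XdX - O.PdP) * O.Db) + 2 * (O.Mc0 * (O.Db * O.Dc0)) := by
  have hDc0Db : O.Dc0 * O.Db + O.Db * O.Dc0 = 0 := O.anticommute_Dc0_Db
  simp only [h, N]
  linear_combination (norm := noncomm_ring) -2 * O.Mc0 * hDc0Db + 2 * O.Mb * O.Db_mul_self

theorem lie_Ω_T₁ : ⁅O.Ω, O.T₁⁆ = -(O.Db * (O.h + O.N - 2)) + O.Mc * O.T₂ := by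
  have hXdP : ⁅O.Ω, O.XdP⁆ = O.Mc0 * (2 * O.S) + O.Mc * O.T2e + (O.XdX - O.PdP) * O.Db := by
    rw [O.lie_Ω_of_even, O.lie_Box_XdP, O.lie_S_XdP, O.lie_Sd_XdP]
  have hMc0Dc : ⁅O.Ω, O.Mc0 * O.Dc⁆ =
      -(O.Mc0 * O.S) + O.Mc * (O.Db * O.Dc) - O.Mc0 * (O.Db * O.Dc0) := by
    have hMc0 : ⁅O.Mc0, O.Mc0 * O.Dc⁆ = 0 := (commute_mul_of_anticommute
      (anticommute_self_of_mul_self_eq_zero O.Mc0_mul_self) O.anticommute_Mc0_Dc).lie_eq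
    have hMc : ⁅O.Mc, O.Mc0 * O.Dc⁆ = -O.Mc0 :=
      lie_mul_eq_neg_of_anticommute O.anticommute_Mc0_Mc.symm O.anticomm_Mc_Dc
    have hDb : ⁅O.Db, O.Mc0 * O.Dc⁆ = 0 :=
      (commute_mul_of_anticommute O.anticommute_Mc0_Db.symm O.anticommute_Dc_Db.symm).lie_eq
    have hDc0 : ⁅O.Dc0, O.Mc0 * O.Dc⁆ = O.Dc := lie_mul_eq_of_anticommute
      (by rw [add_comm]; exact O.anticomm_Mc0_Dc0) O.anticommute_Dc0_Dc
    rw [O.lie_Ω_of_ghost_mul, Ring.mul_lie, Ring.mul_lie, hMc0, hMc, hDb, hDc0]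
    noncomm_ring
  rw [O.Db_mul_h_add_N_sub_two, O.h_add_N_mul_Db, T₁, lie_add, two_mul, lie_add, hXdP, hMc0Dc,
    T₂]
  noncomm_ring

theorem commute_T₁_T₂ : Commute O.T₁ O.T₂ := by
  have hXdP : Commute O.XdP (O.Db * O.Dc) := O.commute_ghost_mul_even.symm
  have hT2e : Commute (O.Mc0 * O.Dc) O.T2e := O.commute_ghost_mul_even
  have hghost : Commute (O.Mc0 * O.Dc) (O.Db * O.Dc) :=
    (commute_mul_of_anticommute O.anticommute_Mc0_Db O.anticommute_Mc0_Dc).mul_left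
      (commute_mul_of_anticommute O.anticommute_Dc_Db
        (anticommute_self_of_mul_self_eq_zero O.Dc_mul_self))
  rw [commute_iff_lie_eq]
  simp only [T₁, T₂, two_mul, lie_add, add_lie, O.commute_XdP_T2e.lie_eq, hXdP.lie_eq,
    hT2e.lie_eq, hghost.lie_eq, add_zero]

end AmbientGhostOperators

end

theorem stmt14_general {A : Type*} [Ring A]
    (Box S Sd XdP PdP XdX T2e Mc0 Mc Mb Dc0 Dc Db : A)
    -- commutators among the even operators
    (hBoxXdP : Box * XdP - XdP * Box = 2 * S)
    (hBoxT2e : Box * T2e = T2e * Box)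
    (hSXdP : S * XdP - XdP * S = T2e)
    (hSdXdP : Sd * XdP - XdP * Sd = XdX - PdP)
    (hXdXXdP : XdX * XdP - XdP * XdX = XdP)
    (hXdXT2e : XdX * T2e = T2e * XdX)
    (hPdPXdP : PdP * XdP - XdP * PdP = -XdP)
    (hPdPT2e : PdP * T2e - T2e * PdP = -(2 * T2e))
    (hST2e : S * T2e = T2e * S)
    (hSdT2e : Sd * T2e - T2e * Sd = 2 * S)
    (hXdPT2e : XdP * T2e = T2e * XdP)
    -- ghost operators commute with the even operators
    (hge : ∀ g ∈ ([Mc0, Mc, Mb, Dc0, Dc, Db] : List A),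
      ∀ e ∈ ([Box, S, Sd, XdP, PdP, XdX, T2e] : List A), g * e = e * g)
    -- squares of the odd operators vanish
    (hMc0sq : Mc0 * Mc0 = 0) (hDcsq : Dc * Dc = 0) (hDbsq : Db * Db = 0)
    -- dual pairs anticommute to the identity
    (hMc0Dc0 : Mc0 * Dc0 + Dc0 * Mc0 = 1)
    (hMcDc : Mc * Dc + Dc * Mc = 1)
    (hMbDb : Mb * Db + Db * Mb = 1)
    -- all other odd pairs anticommute
    (hMc0Mc : Mc0 * Mc + Mc * Mc0 = 0) (hMc0Mb : Mc0 * Mb + Mb * Mc0 = 0)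
    (hMc0Dc : Mc0 * Dc + Dc * Mc0 = 0) (hMc0Db : Mc0 * Db + Db * Mc0 = 0)
    (hMcDb : Mc * Db + Db * Mc = 0)
    (hMbDc : Mb * Dc + Dc * Mb = 0)
    (hDc0Dc : Dc0 * Dc + Dc * Dc0 = 0) (hDc0Db : Dc0 * Db + Db * Dc0 = 0)
    (hDcDb : Dc * Db + Db * Dc = 0)
    -- the composite operators
    (T1 T2 Nop hop Om : A)
    (hT1 : T1 = XdP + 2 * (Mc0 * Dc))
    (hT2 : T2 = T2e + 2 * (Db * Dc))
    (hN : Nop = PdP + Mb * Db + Mc * Dc)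
    (hh : hop = -XdX - 2 * (Mc0 * Dc0) + Mb * Db - Mc * Dc)
    (hOm : Om = Mc0 * Box + Mc * S + Sd * Db + Mc * (Db * Dc0)) :
    Om * T2 - T2 * Om = 0 ∧
    hop * T1 - T1 * hop = -T1 ∧
    hop * T2 - T2 * hop = 0 ∧
    Nop * T1 - T1 * Nop = -T1 ∧
    Nop * T2 - T2 * Nop = -(2 * T2) ∧
    T1 * T2 - T2 * T1 = 0 ∧
    Om * T1 - T1 * Om = -(Db * (hop + Nop - 2)) + Mc * T2 := by
  subst hT1 hT2 hN hh hOm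
  let O : AmbientGhostOperators A := ⟨Box, S, Sd, XdP, PdP, XdX, T2e, Mc0, Mc, Mb, Dc0, Dc, Db,
    hBoxXdP, hBoxT2e, hSXdP, hSdXdP, hXdXXdP, hXdXT2e, hPdPXdP, hPdPT2e, hST2e, hSdT2e, hXdPT2e,
    hge, hMc0sq, hDcsq, hDbsq, hMc0Dc0, hMcDc, hMbDb, hMc0Mc, hMc0Mb, hMc0Dc, hMc0Db, hMcDb, hMbDc,
    hDc0Dc, hDc0Db, hDcDb⟩
  exact ⟨O.lie_Ω_T₂, O.lie_h_T₁, O.lie_h_T₂, O.lie_N_T₁, O.lie_N_T₂, O.commute_T₁_T₂.lie_eq,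
    O.lie_Ω_T₁⟩

/-- In the associative operator algebra generated by the even
operators `□, S = ∂_P·∂_X, S† = −P·∂_X, X·∂_P, P·∂_P, X·∂_X, ∂_P·∂_P` and the odd
ghost operators `c₀, c, b` (left multiplications) and `∂_{c₀}, ∂_c, ∂_b`
(odd derivations), subject to their standard (anti)commutation relations (listed as
hypotheses, all of which hold in the concrete realization on ghost-extended ambient
fields), the composite operators
`T₁ = X·∂_P + 2c₀∂_c`, `T₂ = ∂_P·∂_P + 2∂_b∂_c`, `N = P·∂_P + b∂_b + c∂_c`,
`h = −X·∂_X − 2c₀∂_{c₀} + b∂_b − c∂_c`, `Ω = c₀□ + cS + S†∂_b + c∂_b∂_{c₀}`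
satisfy: `[Ω,T₂] = 0`, `[h,T₁] = −T₁`, `[h,T₂] = 0`, `[N,T₁] = −T₁`,
`[N,T₂] = −2T₂`, `[T₁,T₂] = 0`, and `[Ω,T₁] = −∂_b(h+N−2) + cT₂`. -/
theorem stmt14 {A : Type*} [Ring A]
    (Box S Sd XdP PdP XdX T2e Mc0 Mc Mb Dc0 Dc Db : A)
    -- commutators among the even operators
    (hBoxS : Box * S = S * Box)
    (hBoxSd : Box * Sd = Sd * Box)
    (hBoxXdP : Box * XdP - XdP * Box = 2 * S)
    (hBoxXdX : Box * XdX - XdX * Box = 2 * Box)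
    (hBoxPdP : Box * PdP = PdP * Box)
    (hBoxT2e : Box * T2e = T2e * Box)
    (hSSd : S * Sd - Sd * S = -Box)
    (hSXdP : S * XdP - XdP * S = T2e)
    (hSdXdP : Sd * XdP - XdP * Sd = XdX - PdP)
    (hXdXS : XdX * S - S * XdX = -S)
    (hXdXSd : XdX * Sd - Sd * XdX = -Sd)
    (hXdXXdP : XdX * XdP - XdP * XdX = XdP)
    (hXdXT2e : XdX * T2e = T2e * XdX)
    (hXdXPdP : XdX * PdP = PdP * XdX)
    (hPdPS : PdP * S - S * PdP = -S)
    (hPdPSd : PdP * Sd - Sd * PdP = Sd)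
    (hPdPXdP : PdP * XdP - XdP * PdP = -XdP)
    (hPdPT2e : PdP * T2e - T2e * PdP = -(2 * T2e))
    (hST2e : S * T2e = T2e * S)
    (hSdT2e : Sd * T2e - T2e * Sd = 2 * S)
    (hXdPT2e : XdP * T2e = T2e * XdP)
    -- ghost operators commute with the even operators
    (hge : ∀ g ∈ ([Mc0, Mc, Mb, Dc0, Dc, Db] : List A),
      ∀ e ∈ ([Box, S, Sd, XdP, PdP, XdX, T2e] : List A), g * e = e * g)
    -- squares of the odd operators vanish
    (hMc0sq : Mc0 * Mc0 = 0) (hMcsq : Mc * Mc = 0) (hMbsq : Mb * Mb = 0)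
    (hDc0sq : Dc0 * Dc0 = 0) (hDcsq : Dc * Dc = 0) (hDbsq : Db * Db = 0)
    -- dual pairs anticommute to the identity
    (hMc0Dc0 : Mc0 * Dc0 + Dc0 * Mc0 = 1)
    (hMcDc : Mc * Dc + Dc * Mc = 1)
    (hMbDb : Mb * Db + Db * Mb = 1)
    -- all other odd pairs anticommute
    (hMc0Mc : Mc0 * Mc + Mc * Mc0 = 0) (hMc0Mb : Mc0 * Mb + Mb * Mc0 = 0)
    (hMcMb : Mc * Mb + Mb * Mc = 0)
    (hMc0Dc : Mc0 * Dc + Dc * Mc0 = 0) (hMc0Db : Mc0 * Db + Db * Mc0 = 0)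
    (hMcDc0 : Mc * Dc0 + Dc0 * Mc = 0) (hMcDb : Mc * Db + Db * Mc = 0)
    (hMbDc0 : Mb * Dc0 + Dc0 * Mb = 0) (hMbDc : Mb * Dc + Dc * Mb = 0)
    (hDc0Dc : Dc0 * Dc + Dc * Dc0 = 0) (hDc0Db : Dc0 * Db + Db * Dc0 = 0)
    (hDcDb : Dc * Db + Db * Dc = 0)
    -- the composite operators
    (T1 T2 Nop hop Om : A)
    (hT1 : T1 = XdP + 2 * (Mc0 * Dc))
    (hT2 : T2 = T2e + 2 * (Db * Dc))
    (hN : Nop = PdP + Mb * Db + Mc * Dc)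
    (hh : hop = -XdX - 2 * (Mc0 * Dc0) + Mb * Db - Mc * Dc)
    (hOm : Om = Mc0 * Box + Mc * S + Sd * Db + Mc * (Db * Dc0)) :
    Om * T2 - T2 * Om = 0 ∧
    hop * T1 - T1 * hop = -T1 ∧
    hop * T2 - T2 * hop = 0 ∧
    Nop * T1 - T1 * Nop = -T1 ∧
    Nop * T2 - T2 * Nop = -(2 * T2) ∧
    T1 * T2 - T2 * T1 = 0 ∧
    Om * T1 - T1 * Om = -(Db * (hop + Nop - 2)) + Mc * T2 :=
  stmt14_general Box S Sd XdP PdP XdX T2e Mc0 Mc Mb Dc0 Dc Db hBoxXdP hBoxT2e hSXdP hSdXdP hXdXXdP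
    hXdXT2e hPdPXdP hPdPT2e hST2e hSdT2e hXdPT2e hge hMc0sq hDcsq hDbsq hMc0Dc0 hMcDc hMbDb hMc0Mc
    hMc0Mb hMc0Dc hMc0Db hMcDb hMbDc hDc0Dc hDc0Db hDcDb T1 T2 Nop hop Om hT1 hT2 hN hh hOm
end

section
/- With Ω, T₁, T₂, h, N as above: if Φ satisfies (h+N−t−1)Φ = 0 and T₂Φ = 0, then [Ω, (T₁)^t]Φ = 0 for every positive integer t. -/
/-!
On ghost-extended fields, `[Ω, T₁] = c T₂ - (h + N) ∂_b`, while `T₂` and `∂_b` commute with `T₁`,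
and `T₁`, `∂_b` both lower the eigenvalue of `h + N` by `2`. Hence, if `(h + N) Φ = μ Φ` and
`T₂ Φ = 0`, then `[Ω, T₁] T₁ᵏ Φ = (2k + 2 - μ) T₁ᵏ ∂_b Φ`, and summing
`[Ω, T₁ⁿ⁺¹] = ∑ₖ T₁ⁿ⁻ᵏ [Ω, T₁] T₁ᵏ` gives `[Ω, T₁ⁿ⁺¹] Φ = (n + 1)(n + 2 - μ) T₁ⁿ ∂_b Φ`.
For `μ = t + 1` this vanishes at `n + 1 = t`.
-/

section Ladder

variable {R M : Type*} [CommRing R] [AddCommGroup M] [Module R M]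

theorem ladder_apply {H A : Module.End R M} {a μ : R} {v : M} (hA : H * A - A * H = a • A)
    (hv : H v = μ • v) : H (A v) = (μ + a) • A v := by
  have h := LinearMap.congr_fun hA v
  simp only [LinearMap.sub_apply, Module.End.mul_apply, LinearMap.smul_apply, hv, map_smul] at h
  rw [add_smul, ← h]
  abel

theorem ladder_pow_apply {H A : Module.End R M} {a μ : R} {v : M} (hA : H * A - A * H = a • A)
    (hv : H v = μ • v) (n : ℕ) : H ((A ^ n) v) = (μ + n * a) • (A ^ n) v := by
  induction n with
  | zero => simpa using hv
  | succ n ih =>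
    rw [pow_succ', Module.End.mul_apply, ladder_apply hA ih]
    congr 1
    push_cast
    ring

variable {Ω T K C H D : Module.End R M} {μ : R} {Φ : M}

theorem commutator_pow_succ_apply (hΩT : Ω * T - T * Ω = C * K - H * D) (hKT : Commute K T)
    (hDT : Commute D T) (hHT : H * T - T * H = -(2 * T)) (hHD : H * D - D * H = -(2 * D))
    (hKΦ : K Φ = 0) (hΦ : H Φ = μ • Φ) (n : ℕ) :
    (Ω * T ^ (n + 1) - T ^ (n + 1) * Ω) Φ = ((n + 1) * (n + 2 - μ)) • (T ^ n) (D Φ) := by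
  have lowers {X : Module.End R M} (hX : H * X - X * H = -(2 * X)) :
      H * X - X * H = (-2 : R) • X := by
    rw [hX, neg_smul, two_smul, two_mul]
  have hstep (k : ℕ) : (Ω * T - T * Ω) ((T ^ k) Φ) = (2 + 2 * k - μ) • (T ^ k) (D Φ) := by
    have hK : K ((T ^ k) Φ) = 0 := by
      rw [← Module.End.mul_apply, (hKT.pow_right k).eq, Module.End.mul_apply, hKΦ, map_zero]
    have hD : D ((T ^ k) Φ) = (T ^ k) (D Φ) := LinearMap.congr_fun (hDT.pow_right k).eq Φ
    have hH := ladder_pow_apply (lowers hHT) (ladder_apply (lowers hHD) hΦ) k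
    rw [hΩT, LinearMap.sub_apply, Module.End.mul_apply, Module.End.mul_apply, hK, map_zero, hD, hH]
    module
  induction n with
  | zero => simpa using hstep 0
  | succ n ih =>
    have hsplit : Ω * T ^ (n + 2) - T ^ (n + 2) * Ω
        = T * (Ω * T ^ (n + 1) - T ^ (n + 1) * Ω) + (Ω * T - T * Ω) * T ^ (n + 1) := by
      rw [pow_succ' T (n + 1)]
      noncomm_ring
    rw [hsplit, LinearMap.add_apply, Module.End.mul_apply, Module.End.mul_apply, ih, hstep,
      map_smul, ← Module.End.mul_apply T, ← pow_succ', ← add_smul]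
    congr 1
    push_cast
    ring

theorem commutator_pow_apply_eq_zero (hΩT : Ω * T - T * Ω = C * K - H * D) (hKT : Commute K T)
    (hDT : Commute D T) (hHT : H * T - T * H = -(2 * T)) (hHD : H * D - D * H = -(2 * D))
    (hKΦ : K Φ = 0) (n : ℕ) (hΦ : H Φ = ((n : R) + 1) • Φ) :
    (Ω * T ^ n - T ^ n * Ω) Φ = 0 := by
  cases n with
  | zero => simp
  | succ n =>
    have hcoeff : ((n : R) + 1) * (n + 2 - ((n + 1 : ℕ) + 1)) = 0 := by
      push_cast
      ring
    rw [commutator_pow_succ_apply hΩT hKT hDT hHT hHD hKΦ hΦ, hcoeff, zero_smul]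

end Ladder

theorem mul_mul_of_mul_eq {R : Type*} [Semigroup R] {a b c : R} (h : a * b = c) (x : R) :
    a * (b * x) = c * x := by
  rw [← mul_assoc, h]

/-- The ambient operators `□, S, S†, X·∂_P, P·∂_P, X·∂_X, ∂_P·∂_P` (`Box`, `S`, `Sd`, `XdP`,
`PdP`, `XdX`, `T2e`) and the ghosts `c₀, c, b` with their derivatives `∂_{c₀}, ∂_c, ∂_b` (`Mc0`,
`Mc`, `Mb`, `Dc0`, `Dc`, `Db`). -/
structure GhostAmbientAlgebra (R : Type*) [Ring R] where
  (Box S Sd XdP PdP XdX T2e Mc0 Mc Mb Dc0 Dc Db : R)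
  Box_XdP : Box * XdP - XdP * Box = 2 * S
  S_XdP : S * XdP - XdP * S = T2e
  Sd_XdP : Sd * XdP - XdP * Sd = XdX - PdP
  XdX_XdP : XdX * XdP - XdP * XdX = XdP
  PdP_XdP : PdP * XdP - XdP * PdP = -XdP
  XdP_T2e : XdP * T2e = T2e * XdP
  ghost_comm : ∀ g ∈ [Mc0, Mc, Mb, Dc0, Dc, Db], ∀ e ∈ [Box, S, Sd, XdP, PdP, XdX, T2e],
    g * e = e * g
  Mc0_sq : Mc0 * Mc0 = 0
  Dc_sq : Dc * Dc = 0
  Db_sq : Db * Db = 0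
  Mc0_Dc0 : Mc0 * Dc0 + Dc0 * Mc0 = 1
  Mc_Dc : Mc * Dc + Dc * Mc = 1
  Mb_Db : Mb * Db + Db * Mb = 1
  Mc0_Mc : Mc0 * Mc + Mc * Mc0 = 0
  Mc0_Mb : Mc0 * Mb + Mb * Mc0 = 0
  Mc0_Dc : Mc0 * Dc + Dc * Mc0 = 0
  Mc0_Db : Mc0 * Db + Db * Mc0 = 0
  Mb_Dc : Mb * Dc + Dc * Mb = 0
  Dc0_Dc : Dc0 * Dc + Dc * Dc0 = 0
  Dc0_Db : Dc0 * Db + Db * Dc0 = 0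
  Dc_Db : Dc * Db + Db * Dc = 0

namespace GhostAmbientAlgebra

variable {R : Type*} [Ring R] (A : GhostAmbientAlgebra R)

def T₁ : R := A.XdP + 2 * (A.Mc0 * A.Dc)

def T₂ : R := A.T2e + 2 * (A.Db * A.Dc)

def N : R := A.PdP + A.Mb * A.Db + A.Mc * A.Dc

def h : R := -A.XdX - 2 * (A.Mc0 * A.Dc0) + A.Mb * A.Db - A.Mc * A.Dc

def Ω : R := A.Mc0 * A.Box + A.Mc * A.S + A.Sd * A.Db + A.Mc * (A.Db * A.Dc0)

theorem h_add_N : A.h + A.N = A.PdP - A.XdX - 2 * (A.Mc0 * A.Dc0) + 2 * (A.Mb * A.Db) := by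
  simp only [h, N]
  noncomm_ring

theorem ambient_commute_ghost {e g : R} (he : e ∈ [A.Box, A.S, A.Sd, A.XdP, A.PdP, A.XdX, A.T2e])
    (hg : g ∈ [A.Mc0, A.Mc, A.Mb, A.Dc0, A.Dc, A.Db]) : Commute e g :=
  (A.ghost_comm g hg e he).symm

theorem commute_Box_Mc0 : Commute A.Box A.Mc0 := A.ambient_commute_ghost (by simp) (by simp)
theorem commute_Box_Dc : Commute A.Box A.Dc := A.ambient_commute_ghost (by simp) (by simp)
theorem commute_S_Mc0 : Commute A.S A.Mc0 := A.ambient_commute_ghost (by simp) (by simp)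
theorem commute_S_Dc : Commute A.S A.Dc := A.ambient_commute_ghost (by simp) (by simp)
theorem commute_Sd_Mc0 : Commute A.Sd A.Mc0 := A.ambient_commute_ghost (by simp) (by simp)
theorem commute_Sd_Dc : Commute A.Sd A.Dc := A.ambient_commute_ghost (by simp) (by simp)
theorem commute_Sd_Db : Commute A.Sd A.Db := A.ambient_commute_ghost (by simp) (by simp)
theorem commute_XdP_Mc0 : Commute A.XdP A.Mc0 := A.ambient_commute_ghost (by simp) (by simp)
theorem commute_XdP_Mc : Commute A.XdP A.Mc := A.ambient_commute_ghost (by simp) (by simp)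
theorem commute_XdP_Mb : Commute A.XdP A.Mb := A.ambient_commute_ghost (by simp) (by simp)
theorem commute_XdP_Dc0 : Commute A.XdP A.Dc0 := A.ambient_commute_ghost (by simp) (by simp)
theorem commute_XdP_Dc : Commute A.XdP A.Dc := A.ambient_commute_ghost (by simp) (by simp)
theorem commute_XdP_Db : Commute A.XdP A.Db := A.ambient_commute_ghost (by simp) (by simp)
theorem commute_PdP_Mc0 : Commute A.PdP A.Mc0 := A.ambient_commute_ghost (by simp) (by simp)
theorem commute_PdP_Dc : Commute A.PdP A.Dc := A.ambient_commute_ghost (by simp) (by simp)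
theorem commute_PdP_Db : Commute A.PdP A.Db := A.ambient_commute_ghost (by simp) (by simp)
theorem commute_XdX_Mc0 : Commute A.XdX A.Mc0 := A.ambient_commute_ghost (by simp) (by simp)
theorem commute_XdX_Dc : Commute A.XdX A.Dc := A.ambient_commute_ghost (by simp) (by simp)
theorem commute_XdX_Db : Commute A.XdX A.Db := A.ambient_commute_ghost (by simp) (by simp)
theorem commute_T2e_Mc0 : Commute A.T2e A.Mc0 := A.ambient_commute_ghost (by simp) (by simp)
theorem commute_T2e_Dc : Commute A.T2e A.Dc := A.ambient_commute_ghost (by simp) (by simp)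

-- Oriented to normal-order monomials: ghosts left of ambient operators, `c₀, c, b` left of
-- `∂_{c₀}, ∂_c, ∂_b`, and `X·∂_P` left of the other ambient operators.
theorem Box_mul_XdP : A.Box * A.XdP = 2 * A.S + A.XdP * A.Box := eq_add_of_sub_eq A.Box_XdP
theorem S_mul_XdP : A.S * A.XdP = A.T2e + A.XdP * A.S := eq_add_of_sub_eq A.S_XdP
theorem Sd_mul_XdP : A.Sd * A.XdP = A.XdX - A.PdP + A.XdP * A.Sd := eq_add_of_sub_eq A.Sd_XdP
theorem XdX_mul_XdP : A.XdX * A.XdP = A.XdP + A.XdP * A.XdX := eq_add_of_sub_eq A.XdX_XdP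
theorem PdP_mul_XdP : A.PdP * A.XdP = -A.XdP + A.XdP * A.PdP := eq_add_of_sub_eq A.PdP_XdP

theorem Dc0_mul_Mc0 : A.Dc0 * A.Mc0 = 1 - A.Mc0 * A.Dc0 := eq_sub_of_add_eq' A.Mc0_Dc0
theorem Dc_mul_Mc : A.Dc * A.Mc = 1 - A.Mc * A.Dc := eq_sub_of_add_eq' A.Mc_Dc
theorem Db_mul_Mb : A.Db * A.Mb = 1 - A.Mb * A.Db := eq_sub_of_add_eq' A.Mb_Db
theorem Mc_mul_Mc0 : A.Mc * A.Mc0 = -(A.Mc0 * A.Mc) := eq_neg_of_add_eq_zero_right A.Mc0_Mc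
theorem Mb_mul_Mc0 : A.Mb * A.Mc0 = -(A.Mc0 * A.Mb) := eq_neg_of_add_eq_zero_right A.Mc0_Mb
theorem Dc_mul_Mc0 : A.Dc * A.Mc0 = -(A.Mc0 * A.Dc) := eq_neg_of_add_eq_zero_right A.Mc0_Dc
theorem Db_mul_Mc0 : A.Db * A.Mc0 = -(A.Mc0 * A.Db) := eq_neg_of_add_eq_zero_right A.Mc0_Db
theorem Dc_mul_Mb : A.Dc * A.Mb = -(A.Mb * A.Dc) := eq_neg_of_add_eq_zero_right A.Mb_Dc
theorem Dc_mul_Dc0 : A.Dc * A.Dc0 = -(A.Dc0 * A.Dc) := eq_neg_of_add_eq_zero_right A.Dc0_Dc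
theorem Db_mul_Dc0 : A.Db * A.Dc0 = -(A.Dc0 * A.Db) := eq_neg_of_add_eq_zero_right A.Dc0_Db
theorem Db_mul_Dc : A.Db * A.Dc = -(A.Dc * A.Db) := eq_neg_of_add_eq_zero_right A.Dc_Db

theorem commute_Db_T₁ : Commute A.Db A.T₁ := by
  simp only [Commute, SemiconjBy, T₁, two_mul, mul_add, add_mul, mul_assoc, mul_neg, neg_mul,
    neg_neg, A.commute_XdP_Db.eq, mul_mul_of_mul_eq A.Db_mul_Mc0, A.Db_mul_Dc]

theorem commute_T₂_T₁ : Commute A.T₂ A.T₁ := by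
  simp only [Commute, SemiconjBy, T₂, T₁, two_mul, mul_add, add_mul, mul_assoc, mul_neg, neg_mul,
    neg_neg, neg_add_rev, zero_mul, mul_zero, neg_zero, add_zero, A.XdP_T2e, A.commute_XdP_Db.eq,
    A.commute_XdP_Dc.left_comm, A.commute_T2e_Mc0.left_comm, A.commute_T2e_Dc.eq, A.Db_mul_Dc,
    mul_mul_of_mul_eq A.Db_mul_Mc0, mul_mul_of_mul_eq A.Dc_mul_Mc0, mul_mul_of_mul_eq A.Dc_sq]
  abel

theorem commutator_Ω_T₁ : A.Ω * A.T₁ - A.T₁ * A.Ω = A.Mc * A.T₂ - (A.h + A.N) * A.Db := by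
  rw [h_add_N]
  simp only [Ω, T₁, T₂, two_mul, mul_add, add_mul, mul_sub, sub_mul, mul_assoc, mul_neg, neg_mul,
    neg_neg, sub_neg_eq_add, one_mul, zero_mul, mul_zero, neg_zero, zero_add, add_zero,
    A.Box_mul_XdP, A.S_mul_XdP, A.Sd_mul_XdP, A.commute_Box_Mc0.left_comm, A.commute_Box_Dc.eq,
    A.commute_S_Mc0.left_comm, A.commute_S_Dc.eq, A.commute_Sd_Mc0.left_comm, A.commute_Sd_Dc.eq,
    A.commute_Sd_Db.eq, A.commute_XdP_Mc0.left_comm, A.commute_XdP_Mc.left_comm,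
    A.commute_XdP_Db.left_comm, A.commute_XdP_Db.eq, A.commute_XdP_Dc0.left_comm,
    A.commute_PdP_Db.eq, A.commute_XdX_Db.eq, A.Db_mul_Dc0, A.Db_mul_Dc, A.Db_sq,
    mul_mul_of_mul_eq A.Mc0_sq, mul_mul_of_mul_eq A.Mc_mul_Mc0, mul_mul_of_mul_eq A.Db_mul_Mc0,
    mul_mul_of_mul_eq A.Db_mul_Dc, mul_mul_of_mul_eq A.Dc0_mul_Mc0, mul_mul_of_mul_eq A.Dc_mul_Mc0,
    mul_mul_of_mul_eq A.Dc_mul_Mc, mul_mul_of_mul_eq A.Dc_mul_Dc0]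
  abel

theorem commutator_h_add_N_T₁ : (A.h + A.N) * A.T₁ - A.T₁ * (A.h + A.N) = -(2 * A.T₁) := by
  rw [h_add_N]
  simp only [T₁, two_mul, mul_add, add_mul, mul_sub, sub_mul, mul_assoc, mul_neg, neg_mul, neg_neg,
    one_mul, zero_mul, sub_zero, add_zero, A.PdP_mul_XdP, A.XdX_mul_XdP,
    A.commute_PdP_Mc0.left_comm, A.commute_PdP_Dc.eq, A.commute_XdX_Mc0.left_comm,
    A.commute_XdX_Dc.eq, A.commute_XdP_Mc0.left_comm, A.commute_XdP_Mb.left_comm,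
    A.commute_XdP_Dc0.eq, A.commute_XdP_Db.eq, A.Db_mul_Dc, A.Dc_mul_Dc0,
    mul_mul_of_mul_eq A.Dc0_mul_Mc0, mul_mul_of_mul_eq A.Mc0_sq, mul_mul_of_mul_eq A.Db_mul_Mc0,
    mul_mul_of_mul_eq A.Mb_mul_Mc0, mul_mul_of_mul_eq A.Dc_mul_Mc0, mul_mul_of_mul_eq A.Dc_mul_Mb]
  abel

theorem commutator_h_add_N_Db : (A.h + A.N) * A.Db - A.Db * (A.h + A.N) = -(2 * A.Db) := by
  rw [h_add_N]
  simp only [two_mul, mul_add, add_mul, mul_sub, sub_mul, mul_assoc, mul_neg, neg_mul, neg_neg,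
    one_mul, mul_zero, add_zero, sub_zero, A.commute_PdP_Db.eq, A.commute_XdX_Db.eq, A.Db_sq,
    A.Db_mul_Dc0, mul_mul_of_mul_eq A.Db_mul_Mc0, mul_mul_of_mul_eq A.Db_mul_Mb]
  abel

end GhostAmbientAlgebra

theorem stmt15_general {M : Type*} [AddCommGroup M] [Module ℝ M]
    (Box S Sd XdP PdP XdX T2e Mc0 Mc Mb Dc0 Dc Db : Module.End ℝ M)
    (hBoxXdP : Box * XdP - XdP * Box = 2 * S)
    (hSXdP : S * XdP - XdP * S = T2e)
    (hSdXdP : Sd * XdP - XdP * Sd = XdX - PdP)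
    (hXdXXdP : XdX * XdP - XdP * XdX = XdP)
    (hPdPXdP : PdP * XdP - XdP * PdP = -XdP)
    (hXdPT2e : XdP * T2e = T2e * XdP)
    (hge : ∀ g ∈ ([Mc0, Mc, Mb, Dc0, Dc, Db] : List (Module.End ℝ M)),
      ∀ e ∈ ([Box, S, Sd, XdP, PdP, XdX, T2e] : List (Module.End ℝ M)), g * e = e * g)
    (hMc0sq : Mc0 * Mc0 = 0)
    (hDcsq : Dc * Dc = 0) (hDbsq : Db * Db = 0)
    (hMc0Dc0 : Mc0 * Dc0 + Dc0 * Mc0 = 1)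
    (hMcDc : Mc * Dc + Dc * Mc = 1)
    (hMbDb : Mb * Db + Db * Mb = 1)
    (hMc0Mc : Mc0 * Mc + Mc * Mc0 = 0) (hMc0Mb : Mc0 * Mb + Mb * Mc0 = 0)
    (hMc0Dc : Mc0 * Dc + Dc * Mc0 = 0) (hMc0Db : Mc0 * Db + Db * Mc0 = 0)
    (hMbDc : Mb * Dc + Dc * Mb = 0)
    (hDc0Dc : Dc0 * Dc + Dc * Dc0 = 0) (hDc0Db : Dc0 * Db + Db * Dc0 = 0)
    (hDcDb : Dc * Db + Db * Dc = 0)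
    (T1 T2 Nop hop Om : Module.End ℝ M)
    (hT1 : T1 = XdP + 2 * (Mc0 * Dc))
    (hT2 : T2 = T2e + 2 * (Db * Dc))
    (hN : Nop = PdP + Mb * Db + Mc * Dc)
    (hh : hop = -XdX - 2 * (Mc0 * Dc0) + Mb * Db - Mc * Dc)
    (hOm : Om = Mc0 * Box + Mc * S + Sd * Db + Mc * (Db * Dc0))
    (t : ℕ) (Φ : M)
    (hΦ1 : hop Φ + Nop Φ - ((t : ℝ) + 1) • Φ = 0)
    (hΦ2 : T2 Φ = 0) :
    (Om * T1 ^ t - T1 ^ t * Om) Φ = 0 := by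
  let A : GhostAmbientAlgebra (Module.End ℝ M) :=
    ⟨Box, S, Sd, XdP, PdP, XdX, T2e, Mc0, Mc, Mb, Dc0, Dc, Db, hBoxXdP, hSXdP, hSdXdP, hXdXXdP,
      hPdPXdP, hXdPT2e, hge, hMc0sq, hDcsq, hDbsq, hMc0Dc0, hMcDc, hMbDb, hMc0Mc, hMc0Mb, hMc0Dc,
      hMc0Db, hMbDc, hDc0Dc, hDc0Db, hDcDb⟩
  subst hT1 hT2 hN hh hOm
  exact commutator_pow_apply_eq_zero A.commutator_Ω_T₁ A.commute_T₂_T₁ A.commute_Db_T₁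
    A.commutator_h_add_N_T₁ A.commutator_h_add_N_Db hΦ2 t (sub_eq_zero.mp hΦ1)

/-- With `Ω = c₀□ + cS + S†∂_b + c∂_b∂_{c₀}`,
`T₁ = X·∂_P + 2c₀∂_c`, `T₂ = ∂_P·∂_P + 2∂_b∂_c`, `h`, `N` as in Statement 14 (realized
here as endomorphisms of the space `M` of ghost-extended ambient fields, subject to
their standard (anti)commutation relations): if a field `Φ` satisfies
`(h + N − t − 1)Φ = 0` and `T₂Φ = 0`, then `[Ω, (T₁)^t]Φ = 0` for every integer
`t ≥ 1`. -/
theorem stmt15 {M : Type*} [AddCommGroup M] [Module ℝ M]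
    (Box S Sd XdP PdP XdX T2e Mc0 Mc Mb Dc0 Dc Db : Module.End ℝ M)
    (hBoxS : Box * S = S * Box)
    (hBoxSd : Box * Sd = Sd * Box)
    (hBoxXdP : Box * XdP - XdP * Box = 2 * S)
    (hBoxXdX : Box * XdX - XdX * Box = 2 * Box)
    (hBoxPdP : Box * PdP = PdP * Box)
    (hBoxT2e : Box * T2e = T2e * Box)
    (hSSd : S * Sd - Sd * S = -Box)
    (hSXdP : S * XdP - XdP * S = T2e)
    (hSdXdP : Sd * XdP - XdP * Sd = XdX - PdP)
    (hXdXS : XdX * S - S * XdX = -S)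
    (hXdXSd : XdX * Sd - Sd * XdX = -Sd)
    (hXdXXdP : XdX * XdP - XdP * XdX = XdP)
    (hXdXT2e : XdX * T2e = T2e * XdX)
    (hXdXPdP : XdX * PdP = PdP * XdX)
    (hPdPS : PdP * S - S * PdP = -S)
    (hPdPSd : PdP * Sd - Sd * PdP = Sd)
    (hPdPXdP : PdP * XdP - XdP * PdP = -XdP)
    (hPdPT2e : PdP * T2e - T2e * PdP = -(2 * T2e))
    (hST2e : S * T2e = T2e * S)
    (hSdT2e : Sd * T2e - T2e * Sd = 2 * S)
    (hXdPT2e : XdP * T2e = T2e * XdP)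
    (hge : ∀ g ∈ ([Mc0, Mc, Mb, Dc0, Dc, Db] : List (Module.End ℝ M)),
      ∀ e ∈ ([Box, S, Sd, XdP, PdP, XdX, T2e] : List (Module.End ℝ M)), g * e = e * g)
    (hMc0sq : Mc0 * Mc0 = 0) (hMcsq : Mc * Mc = 0) (hMbsq : Mb * Mb = 0)
    (hDc0sq : Dc0 * Dc0 = 0) (hDcsq : Dc * Dc = 0) (hDbsq : Db * Db = 0)
    (hMc0Dc0 : Mc0 * Dc0 + Dc0 * Mc0 = 1)
    (hMcDc : Mc * Dc + Dc * Mc = 1)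
    (hMbDb : Mb * Db + Db * Mb = 1)
    (hMc0Mc : Mc0 * Mc + Mc * Mc0 = 0) (hMc0Mb : Mc0 * Mb + Mb * Mc0 = 0)
    (hMcMb : Mc * Mb + Mb * Mc = 0)
    (hMc0Dc : Mc0 * Dc + Dc * Mc0 = 0) (hMc0Db : Mc0 * Db + Db * Mc0 = 0)
    (hMcDc0 : Mc * Dc0 + Dc0 * Mc = 0) (hMcDb : Mc * Db + Db * Mc = 0)
    (hMbDc0 : Mb * Dc0 + Dc0 * Mb = 0) (hMbDc : Mb * Dc + Dc * Mb = 0)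
    (hDc0Dc : Dc0 * Dc + Dc * Dc0 = 0) (hDc0Db : Dc0 * Db + Db * Dc0 = 0)
    (hDcDb : Dc * Db + Db * Dc = 0)
    (T1 T2 Nop hop Om : Module.End ℝ M)
    (hT1 : T1 = XdP + 2 * (Mc0 * Dc))
    (hT2 : T2 = T2e + 2 * (Db * Dc))
    (hN : Nop = PdP + Mb * Db + Mc * Dc)
    (hh : hop = -XdX - 2 * (Mc0 * Dc0) + Mb * Db - Mc * Dc)
    (hOm : Om = Mc0 * Box + Mc * S + Sd * Db + Mc * (Db * Dc0))
    (t : ℕ) (ht : 1 ≤ t) (Φ : M)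
    (hΦ1 : hop Φ + Nop Φ - ((t : ℝ) + 1) • Φ = 0)
    (hΦ2 : T2 Φ = 0) :
    (Om * T1 ^ t - T1 ^ t * Om) Φ = 0 :=
  stmt15_general Box S Sd XdP PdP XdX T2e Mc0 Mc Mb Dc0 Dc Db hBoxXdP hSXdP hSdXdP hXdXXdP hPdPXdP
    hXdPT2e hge hMc0sq hDcsq hDbsq hMc0Dc0 hMcDc hMbDb hMc0Mc hMc0Mb hMc0Dc hMc0Db hMbDc hDc0Dc
    hDc0Db hDcDb T1 T2 Nop hop Om hT1 hT2 hN hh hOm t Φ hΦ1 hΦ2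
end
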